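/- For any vectors d, e ∈ (ℤ\{0})⁴ one has Δ(de) ≤ (d₁d₂d₃d₄)²·Δ(e), where de denotes the componentwise product (d₁e₁, d₂e₂, d₃e₃, d₄e₄). -/

import Mathlib

open scoped BigOperators
open MeasureTheory Filter

attribute [local instance 0] Classical.propDecidable

noncomputable section

/-- `e(t) = exp(2πit)`. -/
def eC (t : ℝ) : ℂ := Complex.exp (2 * Real.pi * Complex.I * t)

/-- A nonzero integer `z` is squareful if `p² ∣ z` for every prime `p` dividing `z`. -/
def Squareful (z : ℤ) : Prop := ∀ p : ℕ, p.Prime → (p : ℤ) ∣ z → (p : ℤ) ^ 2 ∣ z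

/-- The standard bump function in one variable. -/
def psi1 (t : ℝ) : ℝ := if |t| < 1 then Real.exp (-(1 - t ^ 2)⁻¹) else 0

/-- The smooth weight `w₁`. -/
def w1 (η : ℝ) (x : Fin 4 → ℝ) : ℝ :=
  if ‖x‖ ≤ η then 0
  else if ‖x‖ ≤ 2 * η then Real.exp 1 * psi1 (‖x‖ / η - 2)
  else if ‖x‖ ≤ 1 - η then 1
  else if ‖x‖ ≤ 1 then Real.exp 1 * psi1 (‖x‖ / η - (1 - η) / η)
  else 0

/-- The smooth weight `w₂`. -/
def w2 (η : ℝ) (x : Fin 4 → ℝ) : ℝ :=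
  if ‖x‖ ≤ η then 0
  else if ‖x‖ ≤ 2 * η then Real.exp 1 * psi1 (‖x‖ / η - 2)
  else if ‖x‖ ≤ 1 then 1
  else if ‖x‖ ≤ 1 + η then Real.exp 1 * psi1 (‖x‖ / η - 1 / η)
  else 0

/-- `u(t) = c₀ ψ₁(4t - 3)`, normalised so that `∫ u = 1`. -/
def uFn (t : ℝ) : ℝ := (∫ s : ℝ, psi1 (4 * s - 3))⁻¹ * psi1 (4 * t - 3)

/-- Heath-Brown's function `h(x, y)`. -/
def hFn (x y : ℝ) : ℝ :=
  ∑' j : ℕ, (x * ((j : ℝ) + 1))⁻¹ *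
    (uFn (x * ((j : ℝ) + 1)) - uFn (|y| / (x * ((j : ℝ) + 1))))

/-- The exponential sum `S_{q,a}(c)`. -/
def Sqa (a c : Fin 4 → ℤ) (q : ℕ) : ℂ :=
  ∑ k ∈ (Finset.range q).filter fun k => Nat.gcd k q = 1,
    ∑ b ∈ Fintype.piFinset fun _ : Fin 4 => Finset.range q,
      eC (((((k : ℤ) * (∑ i, a i * (b i : ℤ) ^ 2) + ∑ i, (b i : ℤ) * c i) : ℤ) : ℝ) / (q : ℝ))

/-- Partial sums of the singular series `𝔊_a`. -/
def singularPartial (a : Fin 4 → ℤ) (T : ℕ) : ℂ :=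
  ∑ q ∈ Finset.Icc 1 T, (1 / (q : ℂ) ^ 4) * Sqa a 0 q

/-- The quadratic form `G(x) = Σ εᵢ xᵢ²`. -/
def Gquad (e : Fin 4 → ℤ) (x : Fin 4 → ℝ) : ℝ := ∑ i, (e i : ℝ) * x i ^ 2

/-- The singular integral `σ_∞(ε)`. -/
def sigmaInf (e : Fin 4 → ℤ) : ℂ :=
  ∫ θ : ℝ, ∫ x in Set.univ.pi fun _ : Fin 4 => Set.Icc (-1 : ℝ) 1, eC (-(θ * Gquad e x))

/-- The weighted singular integral `σ_∞(w)`. -/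
def sigmaInfW (w : (Fin 4 → ℝ) → ℝ) (e : Fin 4 → ℤ) : ℂ :=
  ∫ θ : ℝ, ∫ x : Fin 4 → ℝ, (w x : ℂ) * eC (-(θ * Gquad e x))

/-- `Pᵢ = (B / |aᵢ|)^{1/2}`. -/
def Pvec (a : Fin 4 → ℤ) (B : ℝ) (i : Fin 4) : ℝ := Real.sqrt (B / ((a i).natAbs : ℝ))

/-- The oscillatory integral `I_{q,a}(c)`. -/
def Iqa (w : (Fin 4 → ℝ) → ℝ) (a : Fin 4 → ℤ) (B : ℝ) (c : Fin 4 → ℤ) (q : ℝ) : ℂ :=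
  ∫ x : Fin 4 → ℝ,
    (w (fun i => x i / Pvec a B i) : ℂ) *
      (hFn (q / Real.sqrt B) ((∑ i, (a i : ℝ) * x i ^ 2) / B) : ℂ) *
      eC (-(∑ i, (c i : ℝ) * x i) / q)

/-- `Δ(v) = ∏ᵢ gcd(vᵢ, ∏_{j≠i} vⱼ)`. -/
def Delta4 (v : Fin 4 → ℤ) : ℕ :=
  ∏ i, Int.gcd (v i) (∏ j ∈ Finset.univ.erase i, v j)

/-- `Δ_c(a) = ∏ᵢ gcd(gcd(aᵢ,cᵢ), ∏_{j≠i} gcd(aⱼ,cⱼ))`. -/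
def DeltaC (a c : Fin 4 → ℤ) : ℕ :=
  ∏ i, Int.gcd (Int.gcd (a i) (c i) : ℤ) (∏ j ∈ Finset.univ.erase i, (Int.gcd (a j) (c j) : ℤ))

/-- The dual form `F*_a(c)`. -/
def dualForm (a c : Fin 4 → ℤ) : ℤ :=
  ∑ i, (∏ j ∈ Finset.univ.erase i, a j) * c i ^ 2

/-- The counting function `N_a(B)`. -/
def Na (a : Fin 4 → ℤ) (B : ℝ) : ℕ :=
  {x : Fin 4 → ℤ | (∀ i, x i ≠ 0) ∧ (∑ i, a i * x i ^ 2) = 0 ∧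
    ∀ i, (((a i * x i ^ 2).natAbs : ℝ)) ≤ B}.ncard

/-- The smoothly weighted counting function `N_{w,a}(B)`. -/
def Nwa (w : (Fin 4 → ℝ) → ℝ) (a : Fin 4 → ℤ) (B : ℝ) : ℝ :=
  ∑' x : Fin 4 → ℤ,
    if (∀ i, x i ≠ 0) ∧ (∑ i, a i * x i ^ 2) = 0 then
      w fun i => (x i : ℝ) / Pvec a B i
    else 0

/-- The inclusion-exclusion weights `ω(r, s, s₀)`. -/
def omegaFn (r s : Fin 4 → ℕ) (s0 : ℕ) : ℤ :=
  if (∀ i, Squarefree (r i)) ∧ (∀ i, Squarefree (s i)) ∧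
      Finset.univ.gcd s = 1 ∧ (∀ i, Nat.gcd s0 (s i) = 1) ∧
      ∀ p : ℕ, p.Prime → p ∣ (∏ i, r i) * ∏ i, s i → ∀ i, p ∣ r i * s i then
    ArithmeticFunction.moebius s0 *
      ∏ p ∈ ((∏ i, r i) * ∏ i, s i).primeFactors,
        (-1 : ℤ) ^ (((∏ i, r i) * ∏ i, s i).factorization p + 1)
  else 0

/-- The cardinality of the set `𝒩(B; r, s, s₀)`. -/
def calN (B D : ℝ) (r s : Fin 4 → ℕ) (s0 : ℕ) : ℕ :=
  {z : Fin 4 → ℤ | (∀ i, z i ≠ 0) ∧ (∀ i, Squareful (z i)) ∧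
    (∀ i, (((z i).natAbs : ℝ)) ≤ B) ∧ (∑ i, z i) = 0 ∧
    ∃ x y : Fin 4 → ℤ,
      (∀ i, 0 < x i ∧ Squarefree (y i) ∧ z i = x i ^ 2 * y i ^ 3 ∧
        (r i : ℤ) ∣ y i ∧ (s i : ℤ) ∣ x i ∧ (s0 : ℤ) ∣ x i) ∧
      (((∏ i, y i).natAbs : ℝ)) ≤ D ∧ ¬ IsSquare (∏ i, y i)}.ncard

/-- The local counting function `M_n(y, p)`. -/
def Mcount (y : Fin 4 → ℤ) (p n : ℕ) : ℕ :=
  {m : Fin 4 → ℕ | (∀ i, m i < p ^ n) ∧ ((p : ℤ) ^ n ∣ ∑ i, y i ^ 3 * (m i : ℤ) ^ 2) ∧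
    ∃ j, ¬ (p : ℤ) ∣ (m j : ℤ) * y j}.ncard

end

set_option maxHeartbeats 4000000 in
private lemma arith_key (A B : Fin 4 → ℕ) :
    ∑ i, min (A i + B i) (∑ j ∈ Finset.univ.erase i, (A j + B j)) ≤
      2 * ∑ i, A i + ∑ i, min (B i) (∑ j ∈ Finset.univ.erase i, B j) := by
  have e0 : Finset.univ.erase (0 : Fin 4) = {1, 2, 3} := by decide
  have e1 : Finset.univ.erase (1 : Fin 4) = {0, 2, 3} := by decide
  have e2 : Finset.univ.erase (2 : Fin 4) = {0, 1, 3} := by decide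
  have e3 : Finset.univ.erase (3 : Fin 4) = {0, 1, 2} := by decide
  rw [Fin.sum_univ_four, Fin.sum_univ_four (f := A),
    Fin.sum_univ_four (f := fun i => min (B i) (∑ j ∈ Finset.univ.erase i, B j)),
    e0, e1, e2, e3]
  simp only [Finset.sum_insert, Finset.mem_insert, Finset.mem_singleton,
    Finset.sum_singleton, Fin.reduceEq, or_self, not_false_eq_true, or_false, false_or]
  omega

private lemma nat_key (a b : Fin 4 → ℕ) (ha : ∀ i, a i ≠ 0) (hb : ∀ i, b i ≠ 0) :
    (∏ i, Nat.gcd (a i * b i) (∏ j ∈ Finset.univ.erase i, (a j * b j))) ∣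
      (∏ i, a i) ^ 2 * ∏ i, Nat.gcd (b i) (∏ j ∈ Finset.univ.erase i, b j) := by
  have hab : ∀ i, a i * b i ≠ 0 := fun i => mul_ne_zero (ha i) (hb i)
  have hpe : ∀ (v : Fin 4 → ℕ), (∀ i, v i ≠ 0) → ∀ s : Finset (Fin 4),
      ∏ j ∈ s, v j ≠ 0 := fun v hv s => Finset.prod_ne_zero_iff.mpr fun j _ => hv j
  have hg1 : ∀ i : Fin 4, Nat.gcd (a i * b i) (∏ j ∈ Finset.univ.erase i, (a j * b j)) ≠ 0 :=
    fun i => Nat.gcd_ne_zero_left (hab i)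
  have hg2 : ∀ i : Fin 4, Nat.gcd (b i) (∏ j ∈ Finset.univ.erase i, b j) ≠ 0 :=
    fun i => Nat.gcd_ne_zero_left (hb i)
  have hL : (∏ i, Nat.gcd (a i * b i) (∏ j ∈ Finset.univ.erase i, (a j * b j))) ≠ 0 :=
    Finset.prod_ne_zero_iff.mpr fun i _ => hg1 i
  have hR : (∏ i, a i) ^ 2 * ∏ i, Nat.gcd (b i) (∏ j ∈ Finset.univ.erase i, b j) ≠ 0 :=
    mul_ne_zero (pow_ne_zero 2 (hpe a ha _)) (Finset.prod_ne_zero_iff.mpr fun i _ => hg2 i)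
  rw [← Nat.factorization_le_iff_dvd hL hR, Finsupp.le_def]
  intro p
  have hgcd1 : ∀ i : Fin 4,
      (Nat.gcd (a i * b i) (∏ j ∈ Finset.univ.erase i, (a j * b j))).factorization p =
        min ((a i).factorization p + (b i).factorization p)
          (∑ j ∈ Finset.univ.erase i, ((a j).factorization p + (b j).factorization p)) := by
    intro i
    rw [Nat.factorization_gcd (hab i) (hpe _ hab _), Finsupp.inf_apply,
      Nat.factorization_mul (ha i) (hb i),
      Nat.factorization_prod (fun j _ => hab j)]
    simp only [Finsupp.add_apply, Finset.sum_apply']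
    congr 1
    exact Finset.sum_congr rfl fun j _ => by
      rw [Nat.factorization_mul (ha j) (hb j)]; rfl
  have hgcd2 : ∀ i : Fin 4,
      (Nat.gcd (b i) (∏ j ∈ Finset.univ.erase i, b j)).factorization p =
        min ((b i).factorization p) (∑ j ∈ Finset.univ.erase i, (b j).factorization p) := by
    intro i
    rw [Nat.factorization_gcd (hb i) (hpe _ hb _), Finsupp.inf_apply,
      Nat.factorization_prod (fun j _ => hb j)]
    simp only [Finset.sum_apply']
  rw [Nat.factorization_prod (fun i _ => hg1 i),
    Nat.factorization_mul (pow_ne_zero 2 (hpe a ha _))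
      (Finset.prod_ne_zero_iff.mpr fun i _ => hg2 i),
    Nat.factorization_pow, Nat.factorization_prod (fun i _ => hg2 i),
    Nat.factorization_prod (fun i _ => ha i)]
  simp only [Finsupp.add_apply, Finsupp.smul_apply, Finset.sum_apply', smul_eq_mul]
  calc ∑ i, (Nat.gcd (a i * b i) (∏ j ∈ Finset.univ.erase i, (a j * b j))).factorization p
      = ∑ i, min ((a i).factorization p + (b i).factorization p)
          (∑ j ∈ Finset.univ.erase i, ((a j).factorization p + (b j).factorization p)) :=
        Finset.sum_congr rfl fun i _ => hgcd1 i
    _ ≤ 2 * ∑ i, (a i).factorization p +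
          ∑ i, min ((b i).factorization p)
            (∑ j ∈ Finset.univ.erase i, (b j).factorization p) :=
        arith_key _ _
    _ = 2 * ∑ i, (a i).factorization p +
          ∑ i, (Nat.gcd (b i) (∏ j ∈ Finset.univ.erase i, b j)).factorization p := by
        rw [Finset.sum_congr rfl fun i _ => (hgcd2 i).symm]

/-- Lemma 4.14: `Δ(de) ≤ (d₁d₂d₃d₄)² Δ(e)`. -/
theorem statement_13 (d e : Fin 4 → ℤ) (hd : ∀ i, d i ≠ 0) (he : ∀ i, e i ≠ 0) :
    (Delta4 (fun i => d i * e i) : ℤ) ≤ (∏ i, d i) ^ 2 * (Delta4 e : ℤ) := by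
  have hunfold : ∀ v : Fin 4 → ℤ, Delta4 v = ∏ i, Int.gcd (v i) (∏ j ∈ Finset.univ.erase i, v j) := fun v => rfl

  have habs : ∀ (v : Fin 4 → ℤ) (s : Finset (Fin 4)),
      (∏ j ∈ s, v j).natAbs = ∏ j ∈ s, (v j).natAbs :=
    fun v s => map_prod Int.natAbsHom v s
  have hD : ∀ v : Fin 4 → ℤ, Delta4 v =
      ∏ i, Nat.gcd (v i).natAbs (∏ j ∈ Finset.univ.erase i, (v j).natAbs) := by
    intro v
    unfold Delta4
    refine Finset.prod_congr rfl fun i _ => ?_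
    rw [Int.gcd, habs]
  have hdvd := nat_key (fun i => (d i).natAbs) (fun i => (e i).natAbs)
    (fun i => Int.natAbs_ne_zero.mpr (hd i)) (fun i => Int.natAbs_ne_zero.mpr (he i))
  have hle : Delta4 (fun i => d i * e i) ≤
      (∏ i, (d i).natAbs) ^ 2 * Delta4 e := by
    rw [hD, hD]
    refine Nat.le_of_dvd ?_ ?_
    · refine Nat.pos_of_ne_zero (mul_ne_zero (pow_ne_zero 2 ?_) ?_)
      · exact Finset.prod_ne_zero_iff.mpr fun i _ => Int.natAbs_ne_zero.mpr (hd i)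
      · exact Finset.prod_ne_zero_iff.mpr fun i _ =>
          Nat.gcd_ne_zero_left (Int.natAbs_ne_zero.mpr (he i))
    · convert hdvd using 3 with i
      · exact Int.natAbs_mul (d i) (e i)
      · exact Finset.prod_congr rfl fun j _ => Int.natAbs_mul (d j) (e j)
  calc (Delta4 (fun i => d i * e i) : ℤ)
      ≤ (((∏ i, (d i).natAbs) ^ 2 * Delta4 e : ℕ) : ℤ) := by exact_mod_cast hle
    _ = (∏ i, d i) ^ 2 * (Delta4 e : ℤ) := by
        push_cast
        rw [← Finset.abs_prod, sq_abs]
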